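/- arXiv:1810.05693 — 3 statements merged into one kernel-verified Lean document; each statement's English description precedes it below -/
import Mathlib

section
/- Let α < β with αβ ≠ 0 and let γ ∈ ℝ satisfy αγ > −1 and βγ > −1. Then for the function f̄(x) = |x|^γ on ℝ, R_{α,β}(f̄) = (max over ε ∈ [0,1] of C_{α,β,γ}(ε)) · (γα+1)^{1/α}/(γβ+1)^{1/β}, and this maximum over the compact interval [0,1] is attained. -/
open MeasureTheory Set

/-- The `p`-mean of `f` over the interval `(a, b)`:
`M_{(a,b),p}(f) = ((1/(b-a)) ∫_a^b f(x)^p dx)^{1/p}`. -/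
noncomputable def intervalMean (p a b : ℝ) (f : ℝ → ℝ) : ℝ :=
  ((b - a)⁻¹ * ∫ x in a..b, f x ^ p) ^ (1 / p)

/-- The set of ratios `M_{I,β}(f)/M_{I,α}(f)` over bounded intervals `I ⊂ (0,∞)`;
its supremum is `P_{α,β}(f)`. -/
def ratioSetPos (α β : ℝ) (f : ℝ → ℝ) : Set ℝ :=
  {r | ∃ a b : ℝ, 0 ≤ a ∧ a < b ∧ r = intervalMean β a b f / intervalMean α a b f}

/-- The set of ratios `M_{I,β}(g)/M_{I,α}(g)` over bounded intervals `I ⊂ ℝ`;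
its supremum is `R_{α,β}(g)`. -/
def ratioSetAll (α β : ℝ) (g : ℝ → ℝ) : Set ℝ :=
  {r | ∃ a b : ℝ, a < b ∧ r = intervalMean β a b g / intervalMean α a b g}

/-- The function `C_{α,β,γ}(ε)` from the paper:
`C_{α,β,γ}(ε) = (ε^{γβ+1}+1)^{1/β} (1+ε)^{1/α} / ((ε^{γα+1}+1)^{1/α} (1+ε)^{1/β})`. -/
noncomputable def Cfun (α β γ ε : ℝ) : ℝ :=
  ((ε ^ (γ * β + 1) + 1) ^ (1 / β) * (1 + ε) ^ (1 / α)) /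
    ((ε ^ (γ * α + 1) + 1) ^ (1 / α) * (1 + ε) ^ (1 / β))


/-!
The means of `|x|^γ` pick up a factor `|t|^γ` under `x ↦ t x` and do not see the orientation
of an interval, so every ratio of means equals the ratio on some `(ε, 1)` with `-1 ≤ ε < 1`.
On `(-δ, 1)` the means are explicit and the ratio is `C(δ) · P` with
`P = (γα+1)^{1/α} / (γβ+1)^{1/β}`. On `(ε, 1)` with `0 < ε` the ratio is at most
`P = C(0) · P`: after taking logarithms this says that `γ` times the slope at `1` of the
concave function `s ↦ log (1 - ε^s)` is smaller at `1 + γβ` than at `1 + γα`. Hence the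
supremum is the ratio on `(-ε₀, 1)` for a maximiser `ε₀` of the continuous `C` on `[0, 1]`.
-/

open Real

lemma intervalIntegrable_abs_rpow {c : ℝ} (hc : -1 < c) (a b : ℝ) :
    IntervalIntegrable (fun x : ℝ => |x| ^ c) volume a b := by
  have hpos : ∀ b : ℝ, 0 ≤ b → IntervalIntegrable (fun x : ℝ => |x| ^ c) volume 0 b :=
    fun b hb => (intervalIntegral.intervalIntegrable_rpow' hc).congr fun x hx => by
      rw [uIoc_of_le hb] at hx
      simp [abs_of_pos hx.1]
  have hzero : ∀ b : ℝ, IntervalIntegrable (fun x : ℝ => |x| ^ c) volume 0 b := by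
    intro b
    rcases le_total 0 b with hb | hb
    · exact hpos b hb
    · simpa [abs_neg] using (IntervalIntegrable.iff_comp_neg).mp (hpos (-b) (neg_nonneg.2 hb))
  exact (hzero a).symm.trans (hzero b)

lemma integral_abs_rpow_of_nonneg {c a b : ℝ} (hc : -1 < c) (ha : 0 ≤ a) (hb : 0 ≤ b) :
    ∫ x in a..b, |x| ^ c = (b ^ (c + 1) - a ^ (c + 1)) / (c + 1) := by
  rw [← integral_rpow (Or.inl hc)]
  refine intervalIntegral.integral_congr fun x hx => ?_
  simp only [abs_of_nonneg ((le_min ha hb).trans hx.1)]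

lemma integral_abs_rpow_neg_of_nonneg {c a b : ℝ} (hc : -1 < c) (ha : 0 ≤ a) (hb : 0 ≤ b) :
    ∫ x in -a..b, |x| ^ c = (a ^ (c + 1) + b ^ (c + 1)) / (c + 1) := by
  have hc1 : c + 1 ≠ 0 := by linarith
  have hneg : ∫ x in -a..0, |x| ^ c = ∫ x in (0 : ℝ)..a, |x| ^ c := by
    simpa [abs_neg] using (intervalIntegral.integral_comp_neg (a := 0) (b := a)
      (fun x : ℝ => |x| ^ c)).symm
  rw [← intervalIntegral.integral_add_adjacent_intervals (intervalIntegrable_abs_rpow hc _ _)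
    (intervalIntegrable_abs_rpow hc _ _), hneg, integral_abs_rpow_of_nonneg hc le_rfl ha,
    integral_abs_rpow_of_nonneg hc le_rfl hb, zero_rpow hc1]
  ring

lemma intervalMean_abs_rpow (p γ a b : ℝ) :
    intervalMean p a b (fun x => |x| ^ γ) =
      ((b - a)⁻¹ * ∫ x in a..b, |x| ^ (γ * p)) ^ (1 / p) := by
  simp only [intervalMean, ← rpow_mul (abs_nonneg _)]

lemma intervalMean_comm (p a b : ℝ) (f : ℝ → ℝ) :
    intervalMean p a b f = intervalMean p b a f := by
  rw [intervalMean, intervalMean, intervalIntegral.integral_symm a b, ← neg_sub, inv_neg,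
    neg_mul, mul_neg]

lemma intervalMean_abs_rpow_mul {p γ t a b : ℝ} (hp : p ≠ 0) (ht : t ≠ 0) (hab : a ≤ b) :
    intervalMean p (t * a) (t * b) (fun x => |x| ^ γ) =
      |t| ^ γ * intervalMean p a b (fun x => |x| ^ γ) := by
  rw [intervalMean_abs_rpow, intervalMean_abs_rpow]
  set I := ∫ x in a..b, |x| ^ (γ * p)
  have hI : ∫ x in t * a..t * b, |x| ^ (γ * p) = t * (|t| ^ (γ * p) * I) := by
    rw [← mul_inv_cancel_left₀ ht (∫ x in t * a..t * b, |x| ^ (γ * p)),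
      ← smul_eq_mul t⁻¹, ← intervalIntegral.integral_comp_mul_left _ ht]
    simp only [I, abs_mul, mul_rpow (abs_nonneg _) (abs_nonneg _),
      intervalIntegral.integral_const_mul]
  have hmean : 0 ≤ (b - a)⁻¹ * I :=
    mul_nonneg (inv_nonneg.2 (sub_nonneg.2 hab))
      (intervalIntegral.integral_nonneg hab fun x _ => rpow_nonneg (abs_nonneg x) _)
  have hscale :
      (t * b - t * a)⁻¹ * (t * (|t| ^ (γ * p) * I)) = |t| ^ (γ * p) * ((b - a)⁻¹ * I) := by
    rw [← mul_sub]
    field_simp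
  rw [hI, hscale, mul_rpow (rpow_nonneg (abs_nonneg t) _) hmean, ← rpow_mul (abs_nonneg t),
    mul_assoc, mul_one_div_cancel hp, mul_one]

lemma intervalMean_abs_rpow_neg_one {p γ δ : ℝ} (hA : 0 < γ * p + 1) (hδ : 0 ≤ δ) :
    intervalMean p (-δ) 1 (fun x => |x| ^ γ) =
      ((δ ^ (γ * p + 1) + 1) / (1 + δ)) ^ (1 / p) / (γ * p + 1) ^ (1 / p) := by
  rw [intervalMean_abs_rpow, integral_abs_rpow_neg_of_nonneg (by linarith) hδ zero_le_one,
    one_rpow, sub_neg_eq_add, add_comm 1 δ, ← div_rpow (by positivity) hA.le]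
  congr 1
  field_simp

lemma intervalMean_abs_rpow_one {p γ ε : ℝ} (hA : 0 < γ * p + 1) (hε : 0 ≤ ε)
    (hε1 : ε < 1) :
    intervalMean p ε 1 (fun x => |x| ^ γ) =
      ((1 - ε ^ (γ * p + 1)) / (1 - ε)) ^ (1 / p) / (γ * p + 1) ^ (1 / p) := by
  have : ε ^ (γ * p + 1) < 1 := rpow_lt_one hε hε1 hA
  rw [intervalMean_abs_rpow, integral_abs_rpow_of_nonneg (by linarith) hε zero_le_one,
    one_rpow, ← div_rpow (div_nonneg (by linarith) (by linarith)) hA.le]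
  congr 1
  field_simp

lemma Cfun_eq {α β γ ε : ℝ} (hε : 0 ≤ ε) :
    Cfun α β γ ε = ((ε ^ (γ * β + 1) + 1) / (1 + ε)) ^ (1 / β) /
      ((ε ^ (γ * α + 1) + 1) / (1 + ε)) ^ (1 / α) := by
  rw [Cfun, div_rpow (by positivity) (by positivity), div_rpow (by positivity) (by positivity)]
  have : 0 < (1 + ε) ^ (1 / β) := by positivity
  have : 0 < (1 + ε) ^ (1 / α) := by positivity
  field_simp

lemma Cfun_zero {α β γ : ℝ} (hA : γ * α + 1 ≠ 0) (hB : γ * β + 1 ≠ 0) :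
    Cfun α β γ 0 = 1 := by
  simp [Cfun, zero_rpow hA, zero_rpow hB]

lemma continuousOn_Cfun {α β γ : ℝ} (hA : 0 ≤ γ * α + 1) (hB : 0 ≤ γ * β + 1) :
    ContinuousOn (Cfun α β γ) (Ici 0) := by
  have hsum : ∀ q r : ℝ, 0 ≤ q → ContinuousOn (fun ε : ℝ => (ε ^ q + 1) ^ r) (Ici 0) :=
    fun q r hq =>
      ((continuousOn_id.rpow_const fun _ _ => Or.inr hq).add continuousOn_const).rpow_const
        fun x hx => Or.inl (add_pos_of_nonneg_of_pos (rpow_nonneg hx q) one_pos).ne'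
  have hone : ∀ r : ℝ, ContinuousOn (fun ε : ℝ => (1 + ε) ^ r) (Ici 0) :=
    fun r => (continuousOn_const.add continuousOn_id).rpow_const
      fun x hx => Or.inl (add_pos_of_pos_of_nonneg one_pos hx).ne'
  refine ((hsum _ _ hB).mul (hone _)).div ((hsum _ _ hA).mul (hone _)) fun x hx => ?_
  have : (0 : ℝ) ≤ x := hx
  positivity

lemma concaveOn_log_one_sub_rpow {ε : ℝ} (hε0 : 0 < ε) (hε1 : ε < 1) :
    ConcaveOn ℝ (Ioi 0) (fun s : ℝ => log (1 - ε ^ s)) := by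
  have hpos : ∀ s ∈ Ioi (0 : ℝ), 0 < 1 - ε ^ s :=
    fun s hs => sub_pos.2 (rpow_lt_one hε0.le hε1 hs)
  refine ⟨convex_Ioi 0, fun x hx y hy a b ha hb hab => ?_⟩
  have hexp := (convexOn_rpow_left hε0).2 (mem_univ x) (mem_univ y) ha hb hab
  simp only [smul_eq_mul] at hexp ⊢
  calc a * log (1 - ε ^ x) + b * log (1 - ε ^ y) ≤ log (a * (1 - ε ^ x) + b * (1 - ε ^ y)) :=
        strictConcaveOn_log_Ioi.concaveOn.2 (hpos x hx) (hpos y hy) ha hb hab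
    _ ≤ log (1 - ε ^ (a * x + b * y)) := by
        refine log_le_log ((convex_Ioi (0 : ℝ)) (hpos x hx) (hpos y hy) ha hb hab) ?_
        linear_combination hexp + hab

lemma one_sub_rpow_div_one_sub_rpow_le {α β γ ε : ℝ} (hαβ : α < β) (hα : α ≠ 0)
    (hβ : β ≠ 0) (hA : 0 < γ * α + 1) (hB : 0 < γ * β + 1) (hε : 0 ≤ ε) (hε1 : ε < 1) :
    ((1 - ε ^ (γ * β + 1)) / (1 - ε)) ^ (1 / β) ≤
      ((1 - ε ^ (γ * α + 1)) / (1 - ε)) ^ (1 / α) := by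
  rcases hε.eq_or_lt with rfl | hε0
  · simp [zero_rpow hA.ne', zero_rpow hB.ne']
  rcases eq_or_ne γ 0 with rfl | hγ
  · simp [div_self (sub_pos.2 hε1).ne']
  set φ : ℝ → ℝ := fun s => log (1 - ε ^ s)
  have hQ : ∀ p, p ≠ 0 → 0 < γ * p + 1 →
      0 < (1 - ε ^ (γ * p + 1)) / (1 - ε) ∧
      log (((1 - ε ^ (γ * p + 1)) / (1 - ε)) ^ (1 / p)) = γ * slope φ 1 (γ * p + 1) := by
    intro p hp hAp
    have h1 : 0 < 1 - ε ^ (γ * p + 1) := sub_pos.2 (rpow_lt_one hε hε1 hAp)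
    have h2 : 0 < 1 - ε := sub_pos.2 hε1
    refine ⟨div_pos h1 h2, ?_⟩
    rw [log_rpow (div_pos h1 h2), log_div h1.ne' h2.ne', slope_def_field]
    simp only [φ, rpow_one]
    field_simp
    ring
  have hmem : ∀ p, p ≠ 0 → 0 < γ * p + 1 → γ * p + 1 ∈ Ioi (0 : ℝ) \ {1} :=
    fun p hp hAp => ⟨hAp, by simpa using mul_ne_zero hγ hp⟩
  obtain ⟨hQα, hlogα⟩ := hQ α hα hA
  obtain ⟨hQβ, hlogβ⟩ := hQ β hβ hB
  rw [← log_le_log_iff (rpow_pos_of_pos hQβ _) (rpow_pos_of_pos hQα _), hlogα, hlogβ]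
  have hanti := (concaveOn_log_one_sub_rpow hε0 hε1).slope_anti (mem_Ioi.2 one_pos)
  rcases hγ.lt_or_gt with hγ | hγ
  · exact mul_le_mul_of_nonpos_left
      (hanti (hmem β hβ hB) (hmem α hα hA) (by nlinarith)) hγ.le
  · exact mul_le_mul_of_nonneg_left
      (hanti (hmem α hα hA) (hmem β hβ hB) (by nlinarith)) hγ.le

noncomputable def meanRatio (α β a b : ℝ) (f : ℝ → ℝ) : ℝ :=
  intervalMean β a b f / intervalMean α a b f

section MeanRatio

variable {α β γ : ℝ}

lemma meanRatio_comm (a b : ℝ) (f : ℝ → ℝ) :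
    meanRatio α β a b f = meanRatio α β b a f := by
  simp only [meanRatio, intervalMean_comm _ a b]

lemma meanRatio_abs_rpow_mul {t a b : ℝ} (hα : α ≠ 0) (hβ : β ≠ 0) (ht : t ≠ 0)
    (hab : a ≤ b) :
    meanRatio α β (t * a) (t * b) (fun x => |x| ^ γ) = meanRatio α β a b (fun x => |x| ^ γ) := by
  rw [meanRatio, meanRatio, intervalMean_abs_rpow_mul hβ ht hab,
    intervalMean_abs_rpow_mul hα ht hab,
    mul_div_mul_left _ _ (rpow_pos_of_pos (abs_pos.2 ht) _).ne']

lemma exists_meanRatio_abs_rpow_eq_one {a b : ℝ} (hα : α ≠ 0) (hβ : β ≠ 0) (hab : a < b) :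
    ∃ ε ∈ Ico (-1 : ℝ) 1,
      meanRatio α β a b (fun x => |x| ^ γ) = meanRatio α β ε 1 (fun x => |x| ^ γ) := by
  by_cases h : -a ≤ b
  · have hb : 0 < b := by linarith
    have hε : a / b < 1 := (div_lt_one hb).2 hab
    refine ⟨a / b, ⟨(le_div_iff₀ hb).2 (by linarith), hε⟩, ?_⟩
    simpa only [mul_div_cancel₀ a hb.ne', mul_one] using
      meanRatio_abs_rpow_mul (γ := γ) hα hβ hb.ne' hε.le
  · have ha : a < 0 := by linarith
    have hε : b / a < 1 := (div_lt_one_of_neg ha).2 hab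
    refine ⟨b / a, ⟨(le_div_iff_of_neg ha).2 (by linarith), hε⟩, ?_⟩
    simpa only [mul_div_cancel₀ b ha.ne, mul_one, ← meanRatio_comm a b] using
      meanRatio_abs_rpow_mul (γ := γ) hα hβ ha.ne hε.le

lemma meanRatio_abs_rpow_neg_one {δ : ℝ} (hA : 0 < γ * α + 1) (hB : 0 < γ * β + 1)
    (hδ : 0 ≤ δ) :
    meanRatio α β (-δ) 1 (fun x => |x| ^ γ) =
      Cfun α β γ δ * ((γ * α + 1) ^ (1 / α) / (γ * β + 1) ^ (1 / β)) := by
  rw [meanRatio, intervalMean_abs_rpow_neg_one hB hδ, intervalMean_abs_rpow_neg_one hA hδ,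
    Cfun_eq hδ, div_div_div_eq, mul_comm ((γ * β + 1) ^ (1 / β)), ← div_mul_div_comm]

lemma meanRatio_abs_rpow_one_le {ε : ℝ} (hαβ : α < β) (hα : α ≠ 0) (hβ : β ≠ 0)
    (hA : 0 < γ * α + 1) (hB : 0 < γ * β + 1) (hε : 0 ≤ ε) (hε1 : ε < 1) :
    meanRatio α β ε 1 (fun x => |x| ^ γ) ≤
      (γ * α + 1) ^ (1 / α) / (γ * β + 1) ^ (1 / β) := by
  have hQα : 0 < (1 - ε ^ (γ * α + 1)) / (1 - ε) :=
    div_pos (sub_pos.2 (rpow_lt_one hε hε1 hA)) (sub_pos.2 hε1)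
  rw [meanRatio, intervalMean_abs_rpow_one hB hε hε1, intervalMean_abs_rpow_one hA hε hε1,
    div_div_div_eq, mul_comm ((γ * β + 1) ^ (1 / β)), ← div_mul_div_comm]
  refine mul_le_of_le_one_left (by positivity) ?_
  exact div_le_one_of_le₀ (one_sub_rpow_div_one_sub_rpow_le hαβ hα hβ hA hB hε hε1)
    (rpow_pos_of_pos hQα _).le

lemma isGreatest_ratioSetAll_abs_rpow {ε₀ : ℝ} (hαβ : α < β) (hα : α ≠ 0)
    (hβ : β ≠ 0) (hA : 0 < γ * α + 1) (hB : 0 < γ * β + 1) (hε₀ : ε₀ ∈ Icc (0 : ℝ) 1)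
    (hmax : IsMaxOn (Cfun α β γ) (Icc 0 1) ε₀) :
    IsGreatest (ratioSetAll α β (fun x => |x| ^ γ))
      (Cfun α β γ ε₀ * ((γ * α + 1) ^ (1 / α) / (γ * β + 1) ^ (1 / β))) := by
  have hP : 0 ≤ (γ * α + 1) ^ (1 / α) / (γ * β + 1) ^ (1 / β) := by positivity
  refine ⟨⟨-ε₀, 1, by linarith [hε₀.1], (meanRatio_abs_rpow_neg_one hA hB hε₀.1).symm⟩,
    ?_⟩
  rintro _ ⟨a, b, hab, rfl⟩
  obtain ⟨ε, ⟨hε, hε1⟩, hr⟩ := exists_meanRatio_abs_rpow_eq_one hα hβ hab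
  change meanRatio α β a b _ ≤ _
  rw [hr]
  rcases le_or_gt ε 0 with hε0 | hε0
  · rw [← neg_neg ε, meanRatio_abs_rpow_neg_one hA hB (neg_nonneg.2 hε0)]
    exact mul_le_mul_of_nonneg_right (hmax ⟨neg_nonneg.2 hε0, by linarith⟩) hP
  · calc meanRatio α β ε 1 (fun x => |x| ^ γ)
        ≤ (γ * α + 1) ^ (1 / α) / (γ * β + 1) ^ (1 / β) :=
          meanRatio_abs_rpow_one_le hαβ hα hβ hA hB hε0.le hε1
      _ = Cfun α β γ 0 * ((γ * α + 1) ^ (1 / α) / (γ * β + 1) ^ (1 / β)) := by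
          rw [Cfun_zero hA.ne' hB.ne', one_mul]
      _ ≤ _ := mul_le_mul_of_nonneg_right (hmax ⟨le_rfl, zero_le_one⟩) hP

end MeanRatio

/-- For `α < β` with `αβ ≠ 0` and `γ` with `αγ > -1`, `βγ > -1`, one has
`R_{α,β}(|x|^γ) = (max_{ε ∈ [0,1]} C_{α,β,γ}(ε)) · (γα+1)^{1/α}/(γβ+1)^{1/β}`,
and the maximum over the compact interval `[0,1]` is attained. -/
theorem R_power_eq_max_C_mul_P
    (α β γ : ℝ) (hαβ : α < β) (h0 : α * β ≠ 0)
    (hγα : α * γ > -1) (hγβ : β * γ > -1) :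
    ∃ ε₀ ∈ Icc (0 : ℝ) 1,
      (∀ ε ∈ Icc (0 : ℝ) 1, Cfun α β γ ε ≤ Cfun α β γ ε₀) ∧
      sSup (ratioSetAll α β (fun x => |x| ^ γ)) =
        Cfun α β γ ε₀ * ((γ * α + 1) ^ (1 / α) / (γ * β + 1) ^ (1 / β)) := by
  obtain ⟨hα, hβ⟩ := mul_ne_zero_iff.mp h0
  have hA : 0 < γ * α + 1 := by linarith [mul_comm α γ]
  have hB : 0 < γ * β + 1 := by linarith [mul_comm β γ]
  obtain ⟨ε₀, hε₀, hmax⟩ := isCompact_Icc.exists_isMaxOn (nonempty_Icc.2 zero_le_one)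
    ((continuousOn_Cfun hA.le hB.le).mono Icc_subset_Ici_self)
  exact ⟨ε₀, hε₀, hmax,
    (isGreatest_ratioSetAll_abs_rpow hαβ hα hβ hA hB hε₀ hmax).csSup_eq⟩
end

section
/- Let 0 < α < β and let ε ∈ (0,1). Then the function ψ(x) = (ε^{xβ+1}+1)^{1/β} / (ε^{xα+1}+1)^{1/α} is strictly increasing on [0,∞) and strictly decreasing on (−∞,0]. -/
/-! Write `ψ = exp ∘ L` with `L x = log (ε^(xβ+1) + 1) / β - log (ε^(xα+1) + 1) / α`.
Then `L' x = log ε * (σ (ε^(xβ+1)) - σ (ε^(xα+1)))` with `σ u = u / (u + 1)` increasing.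
Since `ε < 1`, the map `t ↦ ε^t` is decreasing, so for `x > 0` the bracket is negative and
`L' x > 0`, while for `x < 0` the bracket is positive and `L' x < 0`. -/

open Set Real

theorem div_add_one_lt_div_add_one {a b : ℝ} (ha : 0 < a + 1) (hab : a < b) :
    a / (a + 1) < b / (b + 1) := by
  rw [div_lt_div_iff₀ (by linarith) (by linarith)]
  linarith

theorem rpow_div_rpow_add_one_lt_of_lt {ε a b : ℝ} (hε₀ : 0 < ε) (hε₁ : ε < 1) (hab : a < b) :
    ε ^ b / (ε ^ b + 1) < ε ^ a / (ε ^ a + 1) :=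
  div_add_one_lt_div_add_one (by positivity) (rpow_lt_rpow_of_exponent_gt hε₀ hε₁ hab)

theorem hasDerivAt_log_rpow_add_one_div {ε p : ℝ} (hε : 0 < ε) (hp : p ≠ 0) (x : ℝ) :
    HasDerivAt (fun x => log (ε ^ (x * p + 1) + 1) / p)
      (log ε * (ε ^ (x * p + 1) / (ε ^ (x * p + 1) + 1))) x := by
  have hlin : HasDerivAt (fun x : ℝ => x * p + 1) p x := by
    simpa using ((hasDerivAt_id x).mul_const p).add_const 1
  have hpow : HasDerivAt (fun x : ℝ => ε ^ (x * p + 1) + 1) (ε ^ (x * p + 1) * log ε * p) x :=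
    ((hasStrictDerivAt_const_rpow hε (x * p + 1)).hasDerivAt.comp x hlin).add_const 1
  refine ((hpow.log (by positivity)).div_const p).congr_deriv ?_
  field_simp

theorem rpow_one_div_eq_exp_log_div {y : ℝ} (hy : 0 < y) (p : ℝ) :
    y ^ (1 / p) = exp (log y / p) := by
  rw [rpow_def_of_pos hy, mul_one_div]

theorem log_rpow_add_one_div_sub_strictMonoOn_and_strictAntiOn {α β ε : ℝ} (hα : α ≠ 0)
    (hβ : β ≠ 0) (hαβ : α < β) (hε₀ : 0 < ε) (hε₁ : ε < 1) :
    StrictMonoOn (fun x => log (ε ^ (x * β + 1) + 1) / β - log (ε ^ (x * α + 1) + 1) / α)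
        (Ici 0) ∧
      StrictAntiOn (fun x => log (ε ^ (x * β + 1) + 1) / β - log (ε ^ (x * α + 1) + 1) / α)
        (Iic 0) := by
  have hL : ∀ x, HasDerivAt
      (fun x => log (ε ^ (x * β + 1) + 1) / β - log (ε ^ (x * α + 1) + 1) / α)
      (log ε * (ε ^ (x * β + 1) / (ε ^ (x * β + 1) + 1)
        - ε ^ (x * α + 1) / (ε ^ (x * α + 1) + 1))) x := fun x => by
    rw [mul_sub]
    exact (hasDerivAt_log_rpow_add_one_div hε₀ hβ x).sub
      (hasDerivAt_log_rpow_add_one_div hε₀ hα x)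
  have hcont : Continuous
      (fun x => log (ε ^ (x * β + 1) + 1) / β - log (ε ^ (x * α + 1) + 1) / α) :=
    continuous_iff_continuousAt.2 fun x => (hL x).continuousAt
  have hlogε : log ε < 0 := log_neg hε₀ hε₁
  constructor
  · refine strictMonoOn_of_deriv_pos (convex_Ici 0) hcont.continuousOn fun x hx => ?_
    rw [interior_Ici, mem_Ioi] at hx
    rw [(hL x).deriv]
    have hexponent : x * α + 1 < x * β + 1 := by gcongr
    exact mul_pos_of_neg_of_neg hlogε
      (sub_neg.2 (rpow_div_rpow_add_one_lt_of_lt hε₀ hε₁ hexponent))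
  · refine strictAntiOn_of_deriv_neg (convex_Iic 0) hcont.continuousOn fun x hx => ?_
    rw [interior_Iic, mem_Iio] at hx
    rw [(hL x).deriv]
    have hexponent : x * β + 1 < x * α + 1 := by linarith [mul_lt_mul_of_neg_left hαβ hx]
    exact mul_neg_of_neg_of_pos hlogε
      (sub_pos.2 (rpow_div_rpow_add_one_lt_of_lt hε₀ hε₁ hexponent))

/-- For fixed `0 < α < β` and `ε ∈ (0,1)`, the function
`ψ(x) = (ε^{xβ+1}+1)^{1/β} / (ε^{xα+1}+1)^{1/α}`
is strictly increasing on `[0,∞)` and strictly decreasing on `(-∞,0]`. -/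
theorem psi_strictMonoOn_and_strictAntiOn
    (α β ε : ℝ) (hα : 0 < α) (hαβ : α < β) (hε₀ : 0 < ε) (hε₁ : ε < 1) :
    StrictMonoOn
        (fun x : ℝ => (ε ^ (x * β + 1) + 1) ^ (1 / β) / (ε ^ (x * α + 1) + 1) ^ (1 / α))
        (Ici 0) ∧
      StrictAntiOn
        (fun x : ℝ => (ε ^ (x * β + 1) + 1) ^ (1 / β) / (ε ^ (x * α + 1) + 1) ^ (1 / α))
        (Iic 0) := by
  have hψ : (fun x : ℝ => (ε ^ (x * β + 1) + 1) ^ (1 / β) / (ε ^ (x * α + 1) + 1) ^ (1 / α))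
      = exp ∘ fun x => log (ε ^ (x * β + 1) + 1) / β - log (ε ^ (x * α + 1) + 1) / α := by
    funext x
    rw [Function.comp_apply, exp_sub, ← rpow_one_div_eq_exp_log_div (by positivity),
      ← rpow_one_div_eq_exp_log_div (by positivity)]
  obtain ⟨hmono, hanti⟩ := log_rpow_add_one_div_sub_strictMonoOn_and_strictAntiOn hα.ne'
    (hα.trans hαβ).ne' hαβ hε₀ hε₁
  rw [hψ]
  exact ⟨exp_strictMono.comp_strictMonoOn hmono, exp_strictMono.comp_strictAntiOn hanti⟩
end

section
/- Let 0 < α < β. Then the supremum over γ ∈ (−1/β, 0) of C_{α,β,γ} equals 2^{1/β}, where C_{α,β,γ} = max over ε ∈ [0,1] of C_{α,β,γ}(ε). -/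
open Set Filter Topology

/-- `C_{α,β,γ}`: the maximum of `C_{α,β,γ}(ε)` over `ε ∈ [0,1]`. -/
noncomputable def Cmax (α β γ : ℝ) : ℝ :=
  sSup (Cfun α β γ '' Icc (0 : ℝ) 1)

/-! The bound `C_{α,β,γ}(ε) ≤ 2^{1/β}` is termwise: `ε^{γβ+1} ≤ 1`, `ε ≤ ε^{γα+1}` and
`(1+ε)^{1/β} ≥ 1`. It is approached along `γ = -1/β + t`, `ε = t`, `t → 0⁺`: there
`ε^{γβ+1} = t^{βt} → 1`, while `ε^{γα+1} → 0` because its exponent tends to `1 - α/β > 0`. -/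

lemma tendsto_rpow_const_mul_self_nhdsGT_zero (c : ℝ) :
    Tendsto (fun t : ℝ => t ^ (c * t)) (𝓝[>] 0) (𝓝 1) := by
  have hlog : Tendsto (fun t : ℝ => c * (Real.log t * t)) (𝓝[>] 0) (𝓝 0) := by
    simpa using (tendsto_log_mul_rpow_nhdsGT_zero one_pos).const_mul c
  refine (Real.exp_zero ▸ (Real.continuous_exp.tendsto 0).comp hlog).congr' ?_
  filter_upwards [self_mem_nhdsWithin] with t (ht : 0 < t)
  rw [Function.comp_apply, Real.rpow_def_of_pos ht]
  ring_nf

lemma Cfun_le_two_rpow {α β γ ε : ℝ} (hα : 0 < α) (hβ : 0 < β) (hγβ : -(1 / β) ≤ γ)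
    (hγ : γ ≤ 0) (hε : ε ∈ Icc (0 : ℝ) 1) :
    Cfun α β γ ε ≤ (2 : ℝ) ^ (1 / β) := by
  obtain ⟨hε₀, hε₁⟩ := hε
  have hexpβ : 0 ≤ γ * β + 1 := by
    have := mul_le_mul_of_nonneg_right hγβ hβ.le
    rw [neg_mul, one_div_mul_cancel hβ.ne'] at this
    linarith
  have hexpα : γ * α + 1 ≤ 1 := by nlinarith
  have hnum : (ε ^ (γ * β + 1) + 1) ^ (1 / β) ≤ (2 : ℝ) ^ (1 / β) := by
    gcongr
    linarith [Real.rpow_le_one hε₀ hε₁ hexpβ]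
  have hmid : (1 + ε) ^ (1 / α) ≤ (ε ^ (γ * α + 1) + 1) ^ (1 / α) := by
    rw [add_comm 1 ε]
    gcongr
    exact Real.self_le_rpow_of_le_one hε₀ hε₁ hexpα
  have hden : 1 ≤ (1 + ε) ^ (1 / β) := Real.one_le_rpow (by linarith) (by positivity)
  have hden₀ : 0 < (ε ^ (γ * α + 1) + 1) ^ (1 / α) := by positivity
  rw [Cfun, div_le_iff₀ (by positivity)]
  calc (ε ^ (γ * β + 1) + 1) ^ (1 / β) * (1 + ε) ^ (1 / α)
      ≤ (2 : ℝ) ^ (1 / β) * (ε ^ (γ * α + 1) + 1) ^ (1 / α) := by gcongr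
    _ ≤ (2 : ℝ) ^ (1 / β) * ((ε ^ (γ * α + 1) + 1) ^ (1 / α) * (1 + ε) ^ (1 / β)) := by
      gcongr
      exact le_mul_of_one_le_right hden₀.le hden

lemma Cmax_le_two_rpow {α β γ : ℝ} (hα : 0 < α) (hβ : 0 < β) (hγβ : -(1 / β) ≤ γ)
    (hγ : γ ≤ 0) : Cmax α β γ ≤ (2 : ℝ) ^ (1 / β) :=
  csSup_le ((nonempty_Icc.2 zero_le_one).image _) <| by
    rintro _ ⟨ε, hε, rfl⟩
    exact Cfun_le_two_rpow hα hβ hγβ hγ hε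

lemma Cfun_le_Cmax {α β γ ε : ℝ} (hα : 0 < α) (hβ : 0 < β) (hγβ : -(1 / β) ≤ γ)
    (hγ : γ ≤ 0) (hε : ε ∈ Icc (0 : ℝ) 1) : Cfun α β γ ε ≤ Cmax α β γ :=
  le_csSup ⟨_, by rintro _ ⟨ε, hε, rfl⟩; exact Cfun_le_two_rpow hα hβ hγβ hγ hε⟩
    (mem_image_of_mem _ hε)

lemma tendsto_Cfun_nhdsGT_zero {α β : ℝ} (hα : 0 < α) (hαβ : α < β) :
    Tendsto (fun t : ℝ => Cfun α β (-(1 / β) + t) t) (𝓝[>] 0) (𝓝 ((2 : ℝ) ^ (1 / β))) := by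
  have hβ : 0 < β := hα.trans hαβ
  have hid : Tendsto (fun t : ℝ => t) (𝓝[>] 0) (𝓝 0) := nhdsWithin_le_nhds
  have hβterm : Tendsto (fun t : ℝ => t ^ ((-(1 / β) + t) * β + 1)) (𝓝[>] 0) (𝓝 1) := by
    refine (tendsto_rpow_const_mul_self_nhdsGT_zero β).congr fun t => ?_
    congr 1
    field_simp
    ring
  have hαterm : Tendsto (fun t : ℝ => t ^ ((-(1 / β) + t) * α + 1)) (𝓝[>] 0) (𝓝 0) := by
    have hexp : 0 < (-(1 / β) + 0) * α + 1 := by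
      have : α / β < 1 := (div_lt_one hβ).2 hαβ
      have : (-(1 / β) + 0) * α + 1 = 1 - α / β := by ring
      linarith
    have := hid.rpow (((tendsto_const_nhds.add hid).mul_const α).add_const 1) (Or.inr hexp)
    rwa [Real.zero_rpow hexp.ne'] at this
  have hone : Tendsto (fun t : ℝ => 1 + t) (𝓝[>] 0) (𝓝 1) := by
    simpa using hid.const_add 1
  have hnum := ((hβterm.add_const 1).rpow_const (p := 1 / β) (Or.inl (by norm_num))).mul
    (hone.rpow_const (p := 1 / α) (Or.inl one_ne_zero))
  have hden := ((hαterm.add_const 1).rpow_const (p := 1 / α) (Or.inl (by norm_num))).mul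
    (hone.rpow_const (p := 1 / β) (Or.inl one_ne_zero))
  simpa [Cfun, Pi.div_def, one_add_one_eq_two] using hnum.div hden (by norm_num)

lemma exists_lt_Cmax {α β w : ℝ} (hα : 0 < α) (hαβ : α < β) (hw : w < (2 : ℝ) ^ (1 / β)) :
    ∃ γ, -(1 / β) < γ ∧ γ < 0 ∧ w < Cmax α β γ := by
  have hβ : 0 < β := hα.trans hαβ
  have hsmall : Ioo (0 : ℝ) (min (1 / β) 1) ∈ 𝓝[>] 0 :=
    Ioo_mem_nhdsGT (lt_min (by positivity) one_pos)
  obtain ⟨t, hwt, ht₀, ht⟩ :=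
    (((tendsto_Cfun_nhdsGT_zero hα hαβ).eventually (eventually_gt_nhds hw)).and hsmall).exists
  have htβ : t < 1 / β := ht.trans_le (min_le_left _ _)
  have ht₁ : t ≤ 1 := (ht.trans_le (min_le_right _ _)).le
  refine ⟨-(1 / β) + t, by linarith, by linarith, hwt.trans_le ?_⟩
  exact Cfun_le_Cmax hα hβ (by linarith) (by linarith) ⟨ht₀.le, ht₁⟩

/-- For `0 < α < β`, the supremum over `γ ∈ (-1/β, 0)` of `C_{α,β,γ}` equals `2^{1/β}`. -/
theorem sup_Cmax_gamma_neg
    (α β : ℝ) (hα : 0 < α) (hαβ : α < β) :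
    sSup {c | ∃ γ : ℝ, -(1 / β) < γ ∧ γ < 0 ∧ c = Cmax α β γ} = (2 : ℝ) ^ (1 / β) := by
  have hβ : 0 < β := hα.trans hαβ
  obtain ⟨γ₀, hγ₀β, hγ₀, -⟩ := exists_lt_Cmax hα hαβ (sub_one_lt _)
  refine csSup_eq_of_forall_le_of_forall_lt_exists_gt ⟨_, γ₀, hγ₀β, hγ₀, rfl⟩ ?_ fun w hw => ?_
  · rintro _ ⟨γ, hγβ, hγ, rfl⟩
    exact Cmax_le_two_rpow hα hβ hγβ.le hγ.le
  · obtain ⟨γ, hγβ, hγ, hwγ⟩ := exists_lt_Cmax hα hαβ hw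
    exact ⟨_, ⟨γ, hγβ, hγ, rfl⟩, hwγ⟩
end
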